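/- Let ⟨D,<⟩ be a countable random poset and let C ⊆ D be a set containing no subset which (with the induced order) is order-isomorphic to ⟨D,<⟩. Then D \ C, with the induced order, is order-isomorphic to ⟨D,<⟩. -/

import Mathlib

open Set

/-- `A ⊆ X` is a copy of `⟨X,r⟩`: the range of a self-embedding of the relation `r`,
i.e. `A` with the induced order is order-isomorphic to `⟨X,r⟩`. -/
def IsCopy {X : Type*} (r : X → X → Prop) (A : Set X) : Prop :=
  ∃ f : X → X, Function.Injective f ∧ Set.range f = A ∧ ∀ x y, r x y ↔ r (f x) (f y)

/-- The family `P(X)` of copies of `⟨X,r⟩`. -/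
def Copies {X : Type*} (r : X → X → Prop) : Set (Set X) :=
  {A | IsCopy r A}

/-- `C` is a maximal chain in the family `S`, ordered by inclusion. -/
def IsMaxChainIn {X : Type*} (S : Set (Set X)) (C : Set (Set X)) : Prop :=
  C ⊆ S ∧ IsChain (· ⊆ ·) C ∧
    ∀ C' : Set (Set X), C' ⊆ S → IsChain (· ⊆ ·) C' → C ⊆ C' → C' = C

/-- A linear order is complete iff every subset has a supremum and an infimum. -/
def CompleteLO (L : Type*) [LinearOrder L] : Prop :=
  ∀ S : Set L, (∃ a, IsLUB S a) ∧ (∃ b, IsGLB S b)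

/-- `L` embeds into the reals by a strictly increasing map. -/
def REmbeddable (L : Type*) [LinearOrder L] : Prop :=
  ∃ f : L → ℝ, StrictMono f

/-- `L` has a minimum `0_L` which is non-isolated. -/
def BotNonIsolated (L : Type*) [LinearOrder L] : Prop :=
  ∃ z : L, IsBot z ∧ ∀ x, z < x → ∃ y, z < y ∧ y < x

/-- `L` has dense jumps. -/
def DenseJumps (L : Type*) [LinearOrder L] : Prop :=
  ∀ x y : L, x < y → ∃ a b : L, x ≤ a ∧ a < b ∧ b ≤ y ∧ ∀ c, ¬ (a < c ∧ c < b)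

/-- A linear order is Boolean iff it is complete and has dense jumps. -/
def BooleanLO (L : Type*) [LinearOrder L] : Prop :=
  CompleteLO L ∧ DenseJumps L

/-- Every isomorphism between finite suborders of `⟨X,r⟩` extends to an automorphism
of `⟨X,r⟩`. -/
def UltrahomogeneousRel {X : Type*} (r : X → X → Prop) : Prop :=
  ∀ (A : Set X) (f : X → X), A.Finite → Set.InjOn f A →
    (∀ x ∈ A, ∀ y ∈ A, (r x y ↔ r (f x) (f y))) →
    ∃ g : X ≃ X, (∀ x y, r x y ↔ r (g x) (g y)) ∧ ∀ x ∈ A, g x = f x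

/-- `⟨D,r⟩` is a strict partial order with the extension property defining the
countable random poset. -/
def IsRandomPosetRel {D : Type*} (r : D → D → Prop) : Prop :=
  (∀ x, ¬ r x x) ∧ (∀ x y z, r x y → r y z → r x z) ∧
    ∀ L G U : Finset D, Disjoint L G → Disjoint L U → Disjoint G U →
      (∀ l ∈ L, ∀ g ∈ G, r l g) →
      (∀ u ∈ U, ∀ l ∈ L, ¬ r u l) →
      (∀ u ∈ U, ∀ g ∈ G, ¬ r g u) →
      ∃ p : D, p ∉ L ∧ p ∉ G ∧ p ∉ U ∧ (∀ l ∈ L, r l p) ∧ (∀ g ∈ G, r p g) ∧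
        ∀ u ∈ U, p ≠ u ∧ ¬ r p u ∧ ¬ r u p

/-- A positive family of subsets of `D`. -/
def IsPositiveFamily {D : Type*} (P : Set (Set D)) : Prop :=
  ∅ ∉ P ∧ (∀ A B : Set D, A ∈ P → A ⊆ B → B ∈ P) ∧
    (∀ A ∈ P, ∀ F : Set D, F.Finite → A \ F ∈ P) ∧
    ∃ A ∈ P, Aᶜ.Infinite

/-- Isomorphism of binary relational structures. -/
def RelIsoRel {X Y : Type*} (r : X → X → Prop) (s : Y → Y → Prop) : Prop :=
  ∃ e : X ≃ Y, ∀ x y, r x y ↔ s (e x) (e y)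

/-!
Any two countable random posets are isomorphic, by back-and-forth; hence a subset `B ⊆ D` is a
copy of `D` as soon as it has the extension property internally. If `D \ C` failed it, some
admissible triple `L, G, U ⊆ D \ C` would have all its realizers in `C`. But the realizers of an
admissible triple form a random poset themselves (a triple among them, joined with `L, G, U`, is
admissible in `D`), so `C` would contain a copy of `D`.
-/

section BackAndForth

variable {α β : Type*} {r : α → α → Prop} {s : β → β → Prop}

variable (r s) in
def IsPartialRelIso (f : Finset (α × β)) : Prop :=
  ∀ p ∈ f, ∀ q ∈ f, (p.1 = q.1 ↔ p.2 = q.2) ∧ (r p.1 q.1 ↔ s p.2 q.2)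

theorem IsPartialRelIso.map_prodComm {f : Finset (α × β)} (hf : IsPartialRelIso r s f) :
    IsPartialRelIso s r (f.map (Equiv.prodComm α β).toEmbedding) := by
  intro p hp q hq
  rw [Finset.mem_map_equiv] at hp hq
  exact ⟨(hf _ hp _ hq).1.symm, (hf _ hp _ hq).2.symm⟩

theorem IsPartialRelIso.exists_across (hirr : ∀ x, ¬ r x x)
    (htr : ∀ x y z, r x y → r y z → r x z) (hs : IsRandomPosetRel s) {f : Finset (α × β)}
    (hf : IsPartialRelIso r s f) (a : α) :
    ∃ b, ∀ p ∈ f, p.2 ≠ b ∧ (r p.1 a ↔ s p.2 b) ∧ (r a p.1 ↔ s b p.2) := by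
  classical
  -- `b` has to realize the triple of images of the points below, above and incomparable to `a`.
  let part (P : α → Prop) : Finset β := (f.filter (P ·.1)).image Prod.snd
  have mem_part (P : α → Prop) (y : β) : y ∈ part P ↔ ∃ p ∈ f, P p.1 ∧ p.2 = y := by
    simp [part, and_assoc]
  have hinj (p) (hp : p ∈ f) (q) (hq : q ∈ f) (h : p.2 = q.2) : p.1 = q.1 := (hf p hp q hq).1.2 h
  have hasymm (x) (h₁ : r x a) (h₂ : r a x) : False := hirr a (htr _ _ _ h₂ h₁)
  obtain ⟨b, -, -, -, hL, hG, hU⟩ := hs.2.2 (part (r · a)) (part (r a ·))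
    (part fun x => ¬ r x a ∧ ¬ r a x)
    (Finset.disjoint_left.2 fun y => by
      simp only [mem_part]
      rintro ⟨p, hp, hpa, rfl⟩ ⟨q, hq, hqa, hqp⟩
      exact hasymm _ hpa (hinj q hq p hp hqp ▸ hqa))
    (Finset.disjoint_left.2 fun y => by
      simp only [mem_part]
      rintro ⟨p, hp, hpa, rfl⟩ ⟨q, hq, hqa, hqp⟩
      exact hqa.1 (hinj q hq p hp hqp ▸ hpa))
    (Finset.disjoint_left.2 fun y => by
      simp only [mem_part]
      rintro ⟨p, hp, hpa, rfl⟩ ⟨q, hq, hqa, hqp⟩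
      exact hqa.2 (hinj q hq p hp hqp ▸ hpa))
    (by
      simp only [mem_part]
      rintro _ ⟨p, hp, hpa, rfl⟩ _ ⟨q, hq, hqa, rfl⟩
      exact (hf p hp q hq).2.1 (htr _ _ _ hpa hqa))
    (by
      simp only [mem_part]
      rintro _ ⟨q, hq, hqa, rfl⟩ _ ⟨p, hp, hpa, rfl⟩ h
      exact hqa.1 (htr _ _ _ ((hf q hq p hp).2.2 h) hpa))
    (by
      simp only [mem_part]
      rintro _ ⟨q, hq, hqa, rfl⟩ _ ⟨p, hp, hpa, rfl⟩ h
      exact hqa.2 (htr _ _ _ hpa ((hf p hp q hq).2.2 h)))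
  refine ⟨b, fun p hp => ?_⟩
  have hsasymm (h₁ : s p.2 b) (h₂ : s b p.2) : False := hs.1 b (hs.2.1 _ _ _ h₂ h₁)
  by_cases hpa : r p.1 a
  · have hpb := hL p.2 ((mem_part (r · a) _).2 ⟨p, hp, hpa, rfl⟩)
    exact ⟨fun h => hs.1 b (h ▸ hpb), iff_of_true hpa hpb,
      iff_of_false (hasymm _ hpa) (hsasymm hpb)⟩
  by_cases hap : r a p.1
  · have hbp := hG p.2 ((mem_part (r a ·) _).2 ⟨p, hp, hap, rfl⟩)
    exact ⟨fun h => hs.1 b (h ▸ hbp), iff_of_false hpa (hsasymm · hbp), iff_of_true hap hbp⟩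
  · obtain ⟨hbp, hnbp, hnpb⟩ :=
      hU p.2 ((mem_part (fun x => ¬ r x a ∧ ¬ r a x) _).2 ⟨p, hp, ⟨hpa, hap⟩, rfl⟩)
    exact ⟨hbp.symm, iff_of_false hpa hnpb, iff_of_false hap hnbp⟩

theorem isPartialRelIso_insert [DecidableEq α] [DecidableEq β] (hirr : ∀ x, ¬ r x x)
    (hsirr : ∀ x, ¬ s x x) {f : Finset (α × β)} (hf : IsPartialRelIso r s f) {a : α} {b : β}
    (ha : ∀ p ∈ f, p.1 ≠ a) (hb : ∀ p ∈ f, p.2 ≠ b ∧ (r p.1 a ↔ s p.2 b) ∧ (r a p.1 ↔ s b p.2)) :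
    IsPartialRelIso r s (insert (a, b) f) := by
  intro p hp q hq
  rw [Finset.mem_insert] at hp hq
  rcases hp with rfl | hp <;> rcases hq with rfl | hq
  · exact ⟨iff_of_true rfl rfl, iff_of_false (hirr _) (hsirr _)⟩
  · exact ⟨iff_of_false (ha q hq).symm (hb q hq).1.symm, (hb q hq).2.2⟩
  · exact ⟨iff_of_false (ha p hp) (hb p hp).1, (hb p hp).2.1⟩
  · exact hf p hp q hq

theorem IsPartialRelIso.exists_extension_fst (hirr : ∀ x, ¬ r x x)
    (htr : ∀ x y z, r x y → r y z → r x z) (hs : IsRandomPosetRel s) {f : Finset (α × β)}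
    (hf : IsPartialRelIso r s f) (a : α) :
    ∃ g, IsPartialRelIso r s g ∧ f ⊆ g ∧ ∃ b, (a, b) ∈ g := by
  classical
  by_cases hdom : ∃ b, (a, b) ∈ f
  · exact ⟨f, hf, subset_rfl, hdom⟩
  have ha : ∀ p ∈ f, p.1 ≠ a := fun p hp hpa => hdom ⟨p.2, hpa ▸ hp⟩
  obtain ⟨b, hb⟩ := hf.exists_across hirr htr hs a
  exact ⟨insert (a, b) f, isPartialRelIso_insert hirr hs.1 hf ha hb, Finset.subset_insert _ _, b,
    Finset.mem_insert_self _ _⟩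

theorem IsPartialRelIso.exists_extension_snd (hr : IsRandomPosetRel r) (hsirr : ∀ x, ¬ s x x)
    (hstr : ∀ x y z, s x y → s y z → s x z) {f : Finset (α × β)} (hf : IsPartialRelIso r s f)
    (b : β) :
    ∃ g, IsPartialRelIso r s g ∧ f ⊆ g ∧ ∃ a, (a, b) ∈ g := by
  obtain ⟨g, hg, hfg, a, hba⟩ := hf.map_prodComm.exists_extension_fst hsirr hstr hr b
  refine ⟨g.map (Equiv.prodComm β α).toEmbedding, hg.map_prodComm, fun p hp => ?_, a, ?_⟩
  · exact Finset.mem_map_equiv.2 (hfg (Finset.mem_map_equiv.2 (by simpa using hp)))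
  · exact Finset.mem_map_equiv.2 hba

variable (r s) in
abbrev PartialRelIso := {f : Finset (α × β) // IsPartialRelIso r s f}

theorem PartialRelIso.compatible_of_mem_ideal (I : Order.Ideal (PartialRelIso r s))
    {f g : PartialRelIso r s} (hf : f ∈ I) (hg : g ∈ I) {p q : α × β} (hp : p ∈ f.1)
    (hq : q ∈ g.1) : (p.1 = q.1 ↔ p.2 = q.2) ∧ (r p.1 q.1 ↔ s p.2 q.2) := by
  obtain ⟨h, -, hfh, hgh⟩ := I.directed f hf g hg
  exact h.2 p (hfh hp) q (hgh hq)

theorem IsRandomPosetRel.relIsoRel [Countable α] [Countable β] (hr : IsRandomPosetRel r)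
    (hs : IsRandomPosetRel s) : RelIsoRel r s := by
  cases nonempty_encodable α
  cases nonempty_encodable β
  let 𝒟 : α ⊕ β → Order.Cofinal (PartialRelIso r s) :=
    Sum.elim
      (fun a => ⟨{f | ∃ b, (a, b) ∈ f.1}, fun f => by
        obtain ⟨g, hg, hfg, hb⟩ := f.2.exists_extension_fst hr.1 hr.2.1 hs a
        exact ⟨⟨g, hg⟩, hb, hfg⟩⟩)
      (fun b => ⟨{f | ∃ a, (a, b) ∈ f.1}, fun f => by
        obtain ⟨g, hg, hfg, ha⟩ := f.2.exists_extension_snd hr hs.1 hs.2.1 b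
        exact ⟨⟨g, hg⟩, ha, hfg⟩⟩)
  let I := Order.idealOfCofinals (⟨∅, by simp [IsPartialRelIso]⟩ : PartialRelIso r s) 𝒟
  have hfst (a : α) : ∃ b, ∃ f ∈ I, (a, b) ∈ f.1 := by
    obtain ⟨f, ⟨b, hb⟩, hfI⟩ := Order.cofinal_meets_idealOfCofinals _ 𝒟 (.inl a)
    exact ⟨b, f, hfI, hb⟩
  have hsnd (b : β) : ∃ a, ∃ g ∈ I, (a, b) ∈ g.1 := by
    obtain ⟨g, ⟨a, ha⟩, hgI⟩ := Order.cofinal_meets_idealOfCofinals _ 𝒟 (.inr b)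
    exact ⟨a, g, hgI, ha⟩
  choose F f hfI hf using hfst
  choose G g hgI hg using hsnd
  have hI := @PartialRelIso.compatible_of_mem_ideal _ _ r s I
  refine ⟨⟨F, G, fun a => ?_, fun b => ?_⟩, fun a a' => (hI (hfI a) (hfI a') (hf a) (hf a')).2⟩
  · exact (hI (hgI (F a)) (hfI a) (hg (F a)) (hf a)).1.2 rfl
  · exact (hI (hfI (G b)) (hgI b) (hf (G b)) (hg b)).1.1 rfl

end BackAndForth

section Realizers

variable {α β : Type*} {r : α → α → Prop} {s : β → β → Prop}

variable (r) in
def AdmissibleTriple (L G U : Finset α) : Prop :=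
  Disjoint L G ∧ Disjoint L U ∧ Disjoint G U ∧ (∀ l ∈ L, ∀ g ∈ G, r l g) ∧
    (∀ u ∈ U, ∀ l ∈ L, ¬ r u l) ∧ (∀ u ∈ U, ∀ g ∈ G, ¬ r g u)

variable (r) in
def realizers (L G U : Finset α) : Set α :=
  {p | (∀ l ∈ L, r l p) ∧ (∀ g ∈ G, r p g) ∧ ∀ u ∈ U, p ≠ u ∧ ¬ r p u ∧ ¬ r u p}

theorem IsRandomPosetRel.realizers_nonempty (hr : IsRandomPosetRel r) {L G U : Finset α}
    (h : AdmissibleTriple r L G U) : (realizers r L G U).Nonempty := by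
  obtain ⟨d₁, d₂, d₃, c₁, c₂, c₃⟩ := h
  obtain ⟨p, -, -, -, hp⟩ := hr.2.2 L G U d₁ d₂ d₃ c₁ c₂ c₃
  exact ⟨p, hp⟩

theorem notMem_of_mem_realizers (hirr : ∀ x, ¬ r x x) {L G U : Finset α} {p : α}
    (hp : p ∈ realizers r L G U) : p ∉ L ∧ p ∉ G ∧ p ∉ U :=
  ⟨fun h => hirr p (hp.1 p h), fun h => hirr p (hp.2.1 p h), fun h => (hp.2.2 p h).1 rfl⟩

theorem isRandomPosetRel_of_realizers_nonempty (hirr : ∀ x, ¬ r x x)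
    (htr : ∀ x y z, r x y → r y z → r x z)
    (h : ∀ L G U, AdmissibleTriple r L G U → (realizers r L G U).Nonempty) :
    IsRandomPosetRel r := by
  refine ⟨hirr, htr, fun L G U d₁ d₂ d₃ c₁ c₂ c₃ => ?_⟩
  obtain ⟨p, hp⟩ := h L G U ⟨d₁, d₂, d₃, c₁, c₂, c₃⟩
  exact ⟨p, (notMem_of_mem_realizers hirr hp).1, (notMem_of_mem_realizers hirr hp).2.1,
    (notMem_of_mem_realizers hirr hp).2.2, hp⟩

theorem AdmissibleTriple.map (f : α ↪ β) (hf : ∀ x y, r x y ↔ s (f x) (f y))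
    {L G U : Finset α} (h : AdmissibleTriple r L G U) :
    AdmissibleTriple s (L.map f) (G.map f) (U.map f) := by
  simp only [AdmissibleTriple, Finset.disjoint_map, Finset.forall_mem_map, ← hf] at h ⊢
  exact h

theorem preimage_realizers_map (f : α ↪ β) (hf : ∀ x y, r x y ↔ s (f x) (f y))
    (L G U : Finset α) : f ⁻¹' realizers s (L.map f) (G.map f) (U.map f) = realizers r L G U := by
  ext p
  simp [realizers, ← hf]

theorem realizers_union [DecidableEq α] (L G U L' G' U' : Finset α) :
    realizers r (L ∪ L') (G ∪ G') (U ∪ U') = realizers r L G U ∩ realizers r L' G' U' := by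
  ext p
  simp only [realizers, Finset.mem_union, or_imp, forall_and, Set.mem_inter_iff,
    Set.mem_ofPred_eq]
  tauto

theorem AdmissibleTriple.union [DecidableEq α] (hirr : ∀ x, ¬ r x x)
    (htr : ∀ x y z, r x y → r y z → r x z) {L G U L' G' U' : Finset α}
    (h : AdmissibleTriple r L G U) (h' : AdmissibleTriple r L' G' U')
    (hL : ↑L' ⊆ realizers r L G U) (hG : ↑G' ⊆ realizers r L G U)
    (hU : ↑U' ⊆ realizers r L G U) :
    AdmissibleTriple r (L ∪ L') (G ∪ G') (U ∪ U') := by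
  simp only [AdmissibleTriple, Finset.disjoint_union_left, Finset.disjoint_union_right,
    Finset.mem_union, or_imp, forall_and] at h h' ⊢
  obtain ⟨d₁, d₂, d₃, c₁, c₂, c₃⟩ := h
  obtain ⟨d₁', d₂', d₃', c₁', c₂', c₃'⟩ := h'
  have outside {A : Finset α} (hA : ↑A ⊆ realizers r L G U) :
      Disjoint L A ∧ Disjoint G A ∧ Disjoint U A :=
    ⟨Finset.disjoint_right.2 fun _ hx => (notMem_of_mem_realizers hirr (hA hx)).1,
      Finset.disjoint_right.2 fun _ hx => (notMem_of_mem_realizers hirr (hA hx)).2.1,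
      Finset.disjoint_right.2 fun _ hx => (notMem_of_mem_realizers hirr (hA hx)).2.2⟩
  refine ⟨⟨⟨d₁, (outside hL).2.1.symm⟩, (outside hG).1, d₁'⟩,
    ⟨⟨d₂, (outside hL).2.2.symm⟩, (outside hU).1, d₂'⟩,
    ⟨⟨d₃, (outside hG).2.2.symm⟩, (outside hU).2.1, d₃'⟩,
    ⟨⟨c₁, fun l hl g hg => (hL hl).2.1 g hg⟩, fun l hl g hg => (hG hg).1 l hl, c₁'⟩,
    ⟨⟨c₂, fun u hu l hl hul => hirr u (htr _ _ _ hul ((hU hu).1 l hl))⟩,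
      fun u hu l hl => ((hL hl).2.2 u hu).2.2, c₂'⟩,
    ⟨⟨c₃, fun u hu g hg hgu => hirr u (htr _ _ _ ((hU hu).2.1 g hg) hgu)⟩,
      fun u hu g hg => ((hG hg).2.2 u hu).2.1, c₃'⟩⟩

theorem isRandomPosetRel_subtype {B : Set α}
    (hirr : ∀ x, ¬ r x x) (htr : ∀ x y z, r x y → r y z → r x z)
    (h : ∀ L G U : Finset α, ↑L ⊆ B → ↑G ⊆ B → ↑U ⊆ B → AdmissibleTriple r L G U →
      (B ∩ realizers r L G U).Nonempty) :
    IsRandomPosetRel (fun x y : B => r x y) := by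
  refine isRandomPosetRel_of_realizers_nonempty (fun x => hirr x) (fun x y z => htr x y z)
    fun L G U hadm => ?_
  let e := Function.Embedding.subtype (· ∈ B)
  have he : ∀ x y : B, r x y ↔ r (e x) (e y) := fun _ _ => Iff.rfl
  have hsub (A : Finset B) : ↑(A.map e) ⊆ B := by
    simp only [Finset.coe_map, Set.image_subset_iff]
    exact fun x _ => x.2
  obtain ⟨p, hpB, hp⟩ := h _ _ _ (hsub L) (hsub G) (hsub U) (hadm.map e he)
  exact ⟨⟨p, hpB⟩, preimage_realizers_map e he L G U ▸ hp⟩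

theorem IsRandomPosetRel.isRandomPosetRel_realizers (hr : IsRandomPosetRel r)
    {L G U : Finset α} (h : AdmissibleTriple r L G U) :
    IsRandomPosetRel (fun x y : realizers r L G U => r x y) := by
  classical
  refine isRandomPosetRel_subtype hr.1 hr.2.1 fun L' G' U' hL hG hU h' => ?_
  rw [← realizers_union]
  exact hr.realizers_nonempty (h.union hr.1 hr.2.1 h' hL hG hU)

theorem IsRandomPosetRel.isCopy_of_subtype [Countable α] {B : Set α} (hr : IsRandomPosetRel r)
    (hB : IsRandomPosetRel (fun x y : B => r x y)) : IsCopy r B := by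
  obtain ⟨e, he⟩ := hr.relIsoRel hB
  refine ⟨fun x => e x, Subtype.val_injective.comp e.injective, ?_, he⟩
  ext y
  exact ⟨fun ⟨x, hx⟩ => hx ▸ (e x).2, fun hy => ⟨e.symm ⟨y, hy⟩, by simp⟩⟩

end Realizers

theorem statement_12_general {D : Type*} [Countable D] (r : D → D → Prop)
    (hrp : IsRandomPosetRel r) (C : Set D) (hC : ∀ S ⊆ C, ¬ IsCopy r S) :
    IsCopy r (Set.univ \ C) := by
  refine hrp.isCopy_of_subtype (isRandomPosetRel_subtype hrp.1 hrp.2.1 fun L G U _ _ _ h => ?_)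
  by_contra hempty
  have hC' : realizers r L G U ⊆ C := fun p hp => by
    by_contra hpC
    exact hempty ⟨p, ⟨trivial, hpC⟩, hp⟩
  exact hC _ hC' (hrp.isCopy_of_subtype (hrp.isRandomPosetRel_realizers h))

theorem statement_12 {D : Type*} [Countable D] [Infinite D] (r : D → D → Prop)
    (hrp : IsRandomPosetRel r) (C : Set D) (hC : ∀ S ⊆ C, ¬ IsCopy r S) :
    IsCopy r (Set.univ \ C) :=
  statement_12_general r hrp C hC
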